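/- In the expected two-block model with blocks of equal size n/2, if p < 2q then the cut {V₁, V₂} has cost q·n²/4, and any cut {X, X^c} with X ⊆ V₁ and |X| = ⌊n/4⌋ has cost p·⌊n/4⌋·⌈n/4⌉ + q·⌊n/4⌋·(n/2) ≤ q·n²/4. -/

import Mathlib

/-!
Every pair of vertices on opposite sides of `{V₁, V₂}` contributes weight `q`, so that cut costs
`q (n/2)²`. For `X ⊆ V₁` with `a = ⌊n/4⌋` vertices, the complement consists of the
`b = ⌈n/4⌉` remaining vertices of `V₁` (weight `p` each) and all of `V₂` (weight `q` each), giving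
`p a b + q a (a + b)`. Since `a + b = n/2`, comparing with `q (a + b)²` reduces to
`p a b ≤ q b (a + b)`, which follows from `p < 2q` and `2a ≤ a + b`.
-/

open Finset

lemma Finset.sum_sum_eq_card_mul_card_mul {α β R : Type*} [CommSemiring R] {A : Finset α}
    {B : Finset β} {w : α → β → R} {c : R} (hw : ∀ u ∈ A, ∀ v ∈ B, w u v = c) :
    ∑ u ∈ A, ∑ v ∈ B, w u v = #A * #B * c := by
  rw [sum_congr rfl fun u hu => sum_congr rfl fun v hv => hw u hu v hv]
  simp only [sum_const, nsmul_eq_mul]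
  ring

lemma Finset.sum_compl_eq_sum_sdiff_add_sum_compl {α M : Type*} [Fintype α] [DecidableEq α]
    [AddCommMonoid M] {X A : Finset α} (hXA : X ⊆ A) (f : α → M) :
    ∑ v ∈ Xᶜ, f v = ∑ v ∈ A \ X, f v + ∑ v ∈ Aᶜ, f v := by
  have hdisj : Disjoint (A \ X) Aᶜ :=
    disjoint_compl_right.mono_left sdiff_subset
  rw [← sum_union hdisj, union_comm, compl_eq_univ_sdiff, compl_eq_univ_sdiff,
    sdiff_union_sdiff_cancel (subset_univ A) hXA]

section TwoBlockWeight

variable {V : Type*} [DecidableEq V] {V1 : Finset V} {p q : ℝ} {w : V → V → ℝ} {u v : V}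

lemma twoBlock_weight_of_mem_of_notMem
    (hw : ∀ u v, w u v = if u = v then 0 else if (u ∈ V1 ↔ v ∈ V1) then p else q)
    (hu : u ∈ V1) (hv : v ∉ V1) : w u v = q := by
  have huv : u ≠ v := by rintro rfl; exact hv hu
  simp [hw, huv, hu, hv]

lemma twoBlock_weight_of_mem_of_mem
    (hw : ∀ u v, w u v = if u = v then 0 else if (u ∈ V1 ↔ v ∈ V1) then p else q)
    (hu : u ∈ V1) (hv : v ∈ V1) (huv : u ≠ v) : w u v = p := by
  simp [hw, huv, hu, hv]

end TwoBlockWeight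

lemma unbalanced_cut_le_balanced_cut {p q a b : ℝ} (hq : 0 ≤ q) (hp2q : p < 2 * q)
    (ha : 0 ≤ a) (hab : a ≤ b) :
    p * a * b + q * a * (a + b) ≤ q * (a + b) ^ 2 := by
  have hb : 0 ≤ b := ha.trans hab
  have hp : p * (a * b) ≤ 2 * q * (a * b) :=
    mul_le_mul_of_nonneg_right hp2q.le (mul_nonneg ha hb)
  nlinarith [mul_nonneg (mul_nonneg hq hb) (sub_nonneg.mpr hab)]

theorem stmt8_general {V : Type*} [Fintype V] [DecidableEq V] (n : ℕ)
    (V1 V2 : Finset V) (hdisj : Disjoint V1 V2) (hunion : V1 ∪ V2 = Finset.univ)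
    (h1 : 2 * V1.card = n) (h2 : 2 * V2.card = n)
    (p q : ℝ) (hq : 0 ≤ q) (hp2q : p < 2 * q)
    (w : V → V → ℝ)
    (hw : ∀ u v, w u v = if u = v then 0 else if (u ∈ V1 ↔ v ∈ V1) then p else q)
    (X : Finset V) (hX : X ⊆ V1) (hXcard : X.card = n / 4) :
    (∑ u ∈ V1, ∑ v ∈ V1ᶜ, w u v) = q * (n : ℝ) ^ 2 / 4 ∧
      (∑ u ∈ X, ∑ v ∈ Xᶜ, w u v) =
        p * ((n / 4 : ℕ) : ℝ) * (((n + 3) / 4 : ℕ) : ℝ)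
          + q * ((n / 4 : ℕ) : ℝ) * ((n : ℝ) / 2) ∧
      (∑ u ∈ X, ∑ v ∈ Xᶜ, w u v) ≤ q * (n : ℝ) ^ 2 / 4 := by
  have hcompl : V1ᶜ = V2 := IsCompl.compl_eq ⟨hdisj, codisjoint_iff.mpr hunion⟩
  have hcross : ∀ u ∈ V1, ∀ v ∈ V1ᶜ, w u v = q := fun u hu v hv =>
    twoBlock_weight_of_mem_of_notMem hw hu (mem_compl.mp hv)
  have hinner : ∀ u ∈ X, ∀ v ∈ V1 \ X, w u v = p := fun u hu v hv =>
    twoBlock_weight_of_mem_of_mem hw (hX hu) (mem_sdiff.mp hv).1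
      (by rintro rfl; exact (mem_sdiff.mp hv).2 hu)
  have hcard_sdiff : #(V1 \ X) = (n + 3) / 4 := by
    rw [card_sdiff_of_subset hX]; omega
  have hhalf : (n : ℝ) / 2 = ((n / 4 : ℕ) : ℝ) + (((n + 3) / 4 : ℕ) : ℝ) := by
    rw [div_eq_iff two_ne_zero]; norm_cast; omega
  have hcard : (#V1 : ℝ) = n / 2 := by rw [eq_div_iff two_ne_zero]; norm_cast; omega
  have hcard_compl : (#V1ᶜ : ℝ) = n / 2 := by
    rw [hcompl, eq_div_iff two_ne_zero]; norm_cast; omega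
  have hcut : ∑ u ∈ X, ∑ v ∈ Xᶜ, w u v
      = p * ((n / 4 : ℕ) : ℝ) * (((n + 3) / 4 : ℕ) : ℝ)
        + q * ((n / 4 : ℕ) : ℝ) * ((n : ℝ) / 2) := by
    simp only [sum_compl_eq_sum_sdiff_add_sum_compl hX, sum_add_distrib]
    rw [sum_sum_eq_card_mul_card_mul hinner,
      sum_sum_eq_card_mul_card_mul fun u hu => hcross u (hX hu),
      hcard_sdiff, hcard_compl, hXcard]
    ring
  refine ⟨?_, hcut, ?_⟩
  · rw [sum_sum_eq_card_mul_card_mul hcross, hcard, hcard_compl]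
    ring
  · have hle : (n / 4 : ℕ) ≤ (n + 3) / 4 := Nat.div_le_div_right (by omega)
    rw [hcut, hhalf, show q * (n : ℝ) ^ 2 / 4 = q * ((n : ℝ) / 2) ^ 2 by ring, hhalf]
    exact unbalanced_cut_le_balanced_cut hq hp2q (Nat.cast_nonneg _) (by exact_mod_cast hle)

theorem stmt8 {V : Type*} [Fintype V] [DecidableEq V] (n : ℕ) (hn : 0 < n)
    (V1 V2 : Finset V) (hdisj : Disjoint V1 V2) (hunion : V1 ∪ V2 = Finset.univ)
    (h1 : 2 * V1.card = n) (h2 : 2 * V2.card = n)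
    (p q : ℝ) (hq : 0 ≤ q) (hqp : q < p) (hp : p ≤ 1) (hp2q : p < 2 * q)
    (w : V → V → ℝ)
    (hw : ∀ u v, w u v = if u = v then 0 else if (u ∈ V1 ↔ v ∈ V1) then p else q)
    (X : Finset V) (hX : X ⊆ V1) (hXcard : X.card = n / 4) :
    (∑ u ∈ V1, ∑ v ∈ V1ᶜ, w u v) = q * (n : ℝ) ^ 2 / 4 ∧
      (∑ u ∈ X, ∑ v ∈ Xᶜ, w u v) =
        p * ((n / 4 : ℕ) : ℝ) * (((n + 3) / 4 : ℕ) : ℝ)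
          + q * ((n / 4 : ℕ) : ℝ) * ((n : ℝ) / 2) ∧
      (∑ u ∈ X, ∑ v ∈ Xᶜ, w u v) ≤ q * (n : ℝ) ^ 2 / 4 :=
  stmt8_general n V1 V2 hdisj hunion h1 h2 p q hq hp2q w hw X hX hXcard
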